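/- For any commutative ring R and any R-linear map ḡ: Rʳ → Rˢ with r ≥ s, the Eagon–Northcott sequence EN(ḡ) is a complex: the composition of any two consecutive maps is zero, including the composition of the last differential (Sym₁Rˢ)^* ⊗ ⋀^{s+1}Rʳ → ⋀ˢRʳ with the map ⋀ˢḡ: ⋀ˢRʳ → R. -/

import Mathlib

/-!
STATEMENT 4: for any commutative ring `R` and any `R`-linear map `ḡ : Rʳ → Rˢ` with
`r ≥ s`, the Eagon–Northcott sequence
`EN(ḡ) : R ← ⋀ˢRʳ ← (Sym₁Rˢ)^* ⊗ ⋀^{s+1}Rʳ ← ⋯ ← (Sym_{r−s}Rˢ)^* ⊗ ⋀ʳRʳ ← 0`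
is a complex: the composite of any two consecutive maps is zero, including the composite
of the last differential `(Sym₁Rˢ)^* ⊗ ⋀^{s+1}Rʳ → ⋀ˢRʳ` with `⋀ˢḡ : ⋀ˢRʳ → R`.

Concrete realisation: `(Sym_k Rˢ)^* ⊗ ⋀^{s+k} Rʳ` is the free module on pairs `(μ, S)`
where `μ` is an exponent vector on `Fin s` of total size `k` (indexing the dual basis of
the monomial basis of `Sym_k Rˢ`) and `S ⊆ Fin r` has `s + k` elements (indexing
`e_{i₁} ∧ ⋯ ∧ e_{i_{s+k}}`, `i₁ < ⋯ < i_{s+k}`).  The differential sends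
`φ ⊗ e_{i₁} ∧ ⋯ ∧ e_{i_{s+k}}` to `∑_j (−1)^{j+1} φ(ḡ(e_{i_j})·−) ⊗ e_{i₁} ∧ ⋯ ∧
ê_{i_j} ∧ ⋯ ∧ e_{i_{s+k}}`, i.e. in dual-basis coordinates
`(d x)(μ, T) = ∑_{i ∉ T} (−1)^{|{j ∈ T : j < i}|} ∑_l g_{l i} · x (μ + εₗ, T ∪ {i})`,
and the augmentation `⋀ˢ ḡ` sends `e_S` to the `s × s` minor of `ḡ` with columns `S`.
-/

noncomputable section

/-- total size of an exponent vector (the degree of the corresponding monomial) -/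
def expSize {s : ℕ} (d : Fin s →₀ ℕ) : ℕ := d.sum fun _ n => n

/-- The term `(Sym_k Rˢ)^* ⊗ ⋀^{s+k} Rʳ` of the Eagon–Northcott sequence, realised as
the free module on (monomial of degree `k` in `s` variables) × (subset of `Fin r` of
cardinality `s + k`). -/
abbrev ENTerm (A : Type) [CommRing A] (r s k : ℕ) : Type :=
  ({d : Fin s →₀ ℕ // expSize d = k} × {S : Finset (Fin r) // S.card = s + k}) → A

/-- The Eagon–Northcott differential
`(Sym_{k+1} Rˢ)^* ⊗ ⋀^{s+k+1} Rʳ → (Sym_k Rˢ)^* ⊗ ⋀^{s+k} Rʳ`,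
`φ ⊗ e_{i₁} ∧ ⋯ ↦ ∑_j (−1)^{j+1} φ(ḡ(e_{i_j})·−) ⊗ e_{i₁} ∧ ⋯ ∧ ê_{i_j} ∧ ⋯`,
where `g` is the matrix of `ḡ`. -/
noncomputable def ENd {A : Type} [CommRing A] {r s : ℕ}
    (g : Matrix (Fin s) (Fin r) A) (k : ℕ) :
    ENTerm A r s (k + 1) →ₗ[A] ENTerm A r s k :=
  LinearMap.pi fun P => ∑ i : Fin r,
    if h : i ∈ P.2.1 then 0
    else ∑ l : Fin s,
      ((-1 : A) ^ ((P.2.1.filter (· < i)).card) * g l i) •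
        LinearMap.proj (R := A)
          ((⟨⟨P.1.1 + Finsupp.single l 1, by
              simpa [expSize, Finsupp.sum_add_index'] using P.1.2⟩,
            ⟨insert i P.2.1, by rw [Finset.card_insert_of_notMem h, P.2.2]; omega⟩⟩ :
            {d : Fin s →₀ ℕ // expSize d = k + 1} ×
              {S : Finset (Fin r) // S.card = s + (k + 1)}))

/-- The augmentation `⋀ˢ ḡ : ⋀ˢ Rʳ → ⋀ˢ Rˢ ≅ R` of the Eagon–Northcott sequence,
sending `e_{i₁} ∧ ⋯ ∧ e_{i_s}` to the corresponding maximal minor of `g`. -/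
noncomputable def ENaug {A : Type} [CommRing A] {r s : ℕ}
    (g : Matrix (Fin s) (Fin r) A) :
    ENTerm A r s 0 →ₗ[A] A :=
  ∑ S : {S : Finset (Fin r) // S.card = s + 0},
    (Matrix.det (Matrix.of fun a b : Fin s => g a ((S.1.orderIsoOfFin (by omega) b : Fin r)))) •
      (LinearMap.proj (R := A)
        ((⟨0, by simp [expSize]⟩, S) :
          {d : Fin s →₀ ℕ // expSize d = 0} × {S : Finset (Fin r) // S.card = s + 0}))

/-!
Both identities are checked coordinatewise. In `d ∘ d` the term indexed by the ordered pair
`((i, l), (j, m))` cancels the one indexed by `((j, m), (i, l))`: the coefficient `g l i * g m j`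
and the coordinate `(μ + εₗ + εₘ, T ∪ {i, j})` are symmetric, while inserting `i` and then `j`
into `T` costs the opposite sign to inserting `j` and then `i`. In `⋀ˢḡ ∘ d` the coefficient of
the coordinate `(εₗ, T)`, `|T| = s + 1`, is the Laplace expansion along the first row of the
`(s + 1) × (s + 1)` matrix obtained by stacking row `l` of `g|_T` on top of `g|_T`, which has two
equal rows.
-/

open Finset

namespace Finset

variable {α : Type*} [LinearOrder α]

theorem card_filter_lt_insert {T : Finset α} {i : α} (hi : i ∉ T) (j : α) :
    ((insert i T).filter (· < j)).card = (T.filter (· < j)).card + if i < j then 1 else 0 := by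
  rw [filter_insert]
  split_ifs
  · rw [card_insert_of_notMem (by simp [hi])]
  · rfl

theorem neg_one_pow_mul_insert_insert_swap {R : Type*} [CommRing R] (T : Finset α) (i j : α)
    (y : Finset α → R) (hy : ∀ S : Finset α, S.card ≠ T.card + 2 → y S = 0) :
    (-1) ^ (T.filter (· < i)).card * (-1) ^ ((insert i T).filter (· < j)).card *
        y (insert j (insert i T)) =
      -((-1) ^ (T.filter (· < j)).card * (-1) ^ ((insert j T).filter (· < i)).card *
        y (insert i (insert j T))) := by
  rw [insert_comm i j T]
  by_cases hcard : (insert j (insert i T)).card = T.card + 2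
  · have hi : i ∉ T := fun hi => by
      have := card_insert_le j T
      rw [insert_eq_of_mem hi] at hcard
      omega
    have hj : j ∉ insert i T := fun hj => by
      have := card_insert_le i T
      rw [insert_eq_of_mem hj] at hcard
      omega
    rw [mem_insert, not_or] at hj
    rw [card_filter_lt_insert hi, card_filter_lt_insert hj.2]
    rcases lt_or_gt_of_ne hj.1 with h | h <;> simp [h, h.not_gt, pow_succ] <;> ring
  · rw [hy _ hcard]
    simp

theorem card_filter_lt_orderEmbOfFin (T : Finset α) {n : ℕ} (h : T.card = n) (j : Fin n) :
    (T.filter (· < T.orderEmbOfFin h j)).card = j := by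
  calc (T.filter (· < T.orderEmbOfFin h j)).card
      = ((univ.map (T.orderEmbOfFin h).toEmbedding).filter (· < T.orderEmbOfFin h j)).card := by
        rw [map_orderEmbOfFin_univ]
    _ = j := by
      simp only [filter_map, card_map, Function.comp_def, RelEmbedding.coe_toEmbedding,
        OrderEmbedding.lt_iff_lt]
      rw [filter_gt_eq_Iio, Fin.card_Iio]

theorem orderEmbOfFin_erase (T : Finset α) {n : ℕ} (h : T.card = n + 1) (j : Fin (n + 1))
    (h' : (T.erase (T.orderEmbOfFin h j)).card = n) :
    ⇑((T.erase (T.orderEmbOfFin h j)).orderEmbOfFin h') = T.orderEmbOfFin h ∘ j.succAbove :=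
  (orderEmbOfFin_unique h'
    (fun b => mem_erase.mpr ⟨(T.orderEmbOfFin h).injective.ne (Fin.succAbove_ne j b),
      orderEmbOfFin_mem _ _ _⟩)
    ((T.orderEmbOfFin h).strictMono.comp (Fin.strictMono_succAbove j))).symm

theorem sum_sum_compl_eq_sum_sum_erase {ι M : Type*} [Fintype ι] [DecidableEq ι]
    [AddCommMonoid M] (f : Finset ι → ι → M) :
    ∑ S, ∑ i ∈ Sᶜ, f S i = ∑ T, ∑ i ∈ T, f (T.erase i) i :=
  calc ∑ S, ∑ i ∈ Sᶜ, f S i = ∑ i, ∑ S with i ∉ S, f S i := sum_comm' (by simp)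
    _ = ∑ i, ∑ T with i ∈ T, f (T.erase i) i := sum_congr rfl fun i _ =>
      sum_nbij' (insert i) (·.erase i) (by simp) (by simp) (by simp_all) (by simp_all)
        (by simp_all)
    _ = ∑ T, ∑ i ∈ T, f (T.erase i) i := (sum_comm' (by simp)).symm

end Finset

theorem Fintype.sum_sum_eq_zero_of_alternating {ι M : Type*} [Fintype ι] [AddCommMonoid M]
    (f : ι → ι → M) (hf : ∀ a b, f a b + f b a = 0) (hdiag : ∀ a, f a a = 0) :
    ∑ a, ∑ b, f a b = 0 := by
  rw [← Fintype.sum_prod_type']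
  refine sum_ninvolution Prod.swap (fun p => hf p.1 p.2) (fun p hp hswap => hp ?_)
    (fun _ => mem_univ _) Prod.swap_swap
  rw [← congrArg Prod.fst hswap]
  exact hdiag _

namespace Matrix

variable {R : Type*} [CommRing R] {n : ℕ}

theorem sum_neg_one_pow_mul_det_submatrix_succAbove (B : Matrix (Fin n) (Fin (n + 1)) R)
    (l : Fin n) :
    ∑ j : Fin (n + 1), (-1) ^ (j : ℕ) * B l j * (B.submatrix id j.succAbove).det = 0 := by
  have h := det_succ_row_zero (of (Fin.cons (B l) B))
  rw [det_zero_of_row_eq (i := 0) (j := l.succ) (Fin.succ_ne_zero l).symm rfl] at h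
  exact h.symm

variable {ι : Type*} [LinearOrder ι]

def maxMinor (g : Matrix (Fin n) ι R) (S : Finset ι) : R :=
  if h : S.card = n then (g.submatrix id (S.orderEmbOfFin h)).det else 0

theorem maxMinor_of_card_ne (g : Matrix (Fin n) ι R) {S : Finset ι} (h : S.card ≠ n) :
    g.maxMinor S = 0 :=
  dif_neg h

theorem sum_neg_one_pow_mul_maxMinor_erase (g : Matrix (Fin n) ι R) (T : Finset ι) (l : Fin n) :
    ∑ i ∈ T, (-1) ^ (T.filter (· < i)).card * g l i * g.maxMinor (T.erase i) = 0 := by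
  by_cases hT : T.card = n + 1
  · set e := T.orderEmbOfFin hT
    have herase (j : Fin (n + 1)) : (T.erase (e j)).card = n := by
      rw [card_erase_of_mem (orderEmbOfFin_mem T hT j), hT, Nat.add_sub_cancel]
    calc ∑ i ∈ T, (-1) ^ (T.filter (· < i)).card * g l i * g.maxMinor (T.erase i)
        = ∑ i ∈ univ.map e.toEmbedding,
            (-1) ^ (T.filter (· < i)).card * g l i * g.maxMinor (T.erase i) := by
          rw [map_orderEmbOfFin_univ]
      _ = ∑ j : Fin (n + 1), (-1) ^ (j : ℕ) * (g.submatrix id e) l j *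
            ((g.submatrix id e).submatrix id j.succAbove).det := by
          refine (sum_map _ _ _).trans (sum_congr rfl fun j _ => ?_)
          rw [RelEmbedding.coe_toEmbedding, card_filter_lt_orderEmbOfFin, maxMinor,
            dif_pos (herase j), orderEmbOfFin_erase T hT j (herase j)]
          rfl
      _ = 0 := sum_neg_one_pow_mul_det_submatrix_succAbove _ l
  · refine sum_eq_zero fun i hi => ?_
    have hpos := card_pos.mpr ⟨i, hi⟩
    rw [maxMinor_of_card_ne g (by rw [card_erase_of_mem hi]; omega), mul_zero]

end Matrix

theorem expSize_add_single {s : ℕ} (d : Fin s →₀ ℕ) (l : Fin s) :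
    expSize (d + Finsupp.single l 1) = expSize d + 1 := by
  simp [expSize, Finsupp.sum_add_index']

namespace ENTerm

variable {A : Type} [CommRing A] {r s k : ℕ}

/-- The coordinates of `x`, extended by zero to pairs `(d, S)` of the wrong sizes. This keeps the
differential free of size proofs, and terms whose index set is too small vanish by themselves. -/
def coord (x : ENTerm A r s k) (d : Fin s →₀ ℕ) (S : Finset (Fin r)) : A :=
  if h : expSize d = k ∧ S.card = s + k then x (⟨d, h.1⟩, ⟨S, h.2⟩) else 0

theorem coord_val (x : ENTerm A r s k) (P) : x.coord P.1.1 P.2.1 = x P :=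
  dif_pos ⟨P.1.2, P.2.2⟩

theorem coord_of_card_ne (x : ENTerm A r s k) (d : Fin s →₀ ℕ) {S : Finset (Fin r)}
    (h : S.card ≠ s + k) : x.coord d S = 0 :=
  dif_neg fun h' => h h'.2

theorem coord_of_expSize_ne (x : ENTerm A r s k) {d : Fin s →₀ ℕ} (S : Finset (Fin r))
    (h : expSize d ≠ k) : x.coord d S = 0 :=
  dif_neg fun h' => h h'.1

end ENTerm

section

variable {A : Type} [CommRing A] {r s : ℕ} (g : Matrix (Fin s) (Fin r) A)

theorem ENd_apply (k : ℕ) (x : ENTerm A r s (k + 1)) (P) :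
    ENd g k x P = ∑ i, ∑ l, (-1) ^ (P.2.1.filter (· < i)).card * g l i *
      x.coord (P.1.1 + Finsupp.single l 1) (insert i P.2.1) := by
  simp only [ENd, LinearMap.pi_apply, LinearMap.sum_apply]
  refine sum_congr rfl fun i _ => ?_
  split_ifs with hi
  · refine (sum_eq_zero fun l _ => ?_).symm
    rw [x.coord_of_card_ne _ (by rw [insert_eq_of_mem hi, P.2.2]; omega), mul_zero]
  · simp only [LinearMap.sum_apply, LinearMap.smul_apply, LinearMap.proj_apply, smul_eq_mul]
    refine sum_congr rfl fun l _ => ?_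
    rw [ENTerm.coord, dif_pos ⟨by rw [expSize_add_single, P.1.2],
      by rw [card_insert_of_notMem hi, P.2.2]; rfl⟩]

theorem ENd_coord (k : ℕ) (x : ENTerm A r s (k + 1)) (d : Fin s →₀ ℕ) {S : Finset (Fin r)}
    (hS : S.card ≤ s + k) :
    (ENd g k x).coord d S = ∑ i, ∑ l, (-1) ^ (S.filter (· < i)).card * g l i *
      x.coord (d + Finsupp.single l 1) (insert i S) := by
  by_cases h : expSize d = k ∧ S.card = s + k
  · rw [ENTerm.coord, dif_pos h, ENd_apply]
  · rw [ENTerm.coord, dif_neg h]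
    refine (sum_eq_zero fun i _ => sum_eq_zero fun l _ => ?_).symm
    by_cases hd : expSize d = k
    · have := card_insert_le i S
      rw [x.coord_of_card_ne _ (by omega), mul_zero]
    · rw [x.coord_of_expSize_ne _ (by rw [expSize_add_single]; omega), mul_zero]

theorem ENd_comp_ENd (k : ℕ) : (ENd g k).comp (ENd g (k + 1)) = 0 := by
  refine LinearMap.ext fun x => funext fun P => ?_
  obtain ⟨⟨μ, -⟩, ⟨T, hT⟩⟩ := P
  let F : Fin r × Fin s → Fin r × Fin s → A := fun p q =>
    (-1) ^ (T.filter (· < p.1)).card * g p.2 p.1 *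
      ((-1) ^ ((insert p.1 T).filter (· < q.1)).card * g q.2 q.1 *
        x.coord (μ + Finsupp.single p.2 1 + Finsupp.single q.2 1) (insert q.1 (insert p.1 T)))
  have hantisymm : ∀ p q, F p q + F q p = 0 := by
    rintro ⟨i, l⟩ ⟨j, m⟩
    have hswap := T.neg_one_pow_mul_insert_insert_swap i j
      (x.coord (μ + Finsupp.single l 1 + Finsupp.single m 1))
      fun S hS => x.coord_of_card_ne _ (by omega)
    simp only [F]
    rw [add_right_comm μ (Finsupp.single m 1)]
    linear_combination g l i * g m j * hswap
  have hdiag : ∀ p, F p p = 0 := by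
    rintro ⟨i, l⟩
    have := card_insert_le i T
    simp only [F]
    rw [insert_idem, x.coord_of_card_ne _ (by omega), mul_zero, mul_zero]
  rw [LinearMap.comp_apply, LinearMap.zero_apply, Pi.zero_apply]
  calc _ = ∑ p, ∑ q, F p q := by
        rw [ENd_apply, Fintype.sum_prod_type]
        dsimp only
        refine sum_congr rfl fun i _ => sum_congr rfl fun l _ => ?_
        rw [ENd_coord _ _ _ _ (by have := card_insert_le i T; omega), Fintype.sum_prod_type]
        simp only [mul_sum]
        rfl
    _ = 0 := Fintype.sum_sum_eq_zero_of_alternating F hantisymm hdiag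

theorem ENaug_apply (y : ENTerm A r s 0) :
    ENaug g y = ∑ S, g.maxMinor S * y.coord 0 S := by
  rw [← sum_filter_of_ne (p := fun S : Finset (Fin r) => S.card = s + 0) fun S _ h => ?_,
    sum_subtype (p := fun S : Finset (Fin r) => S.card = s + 0) _ fun S => by simp]
  · simp only [ENaug, LinearMap.sum_apply, LinearMap.smul_apply, LinearMap.proj_apply,
      smul_eq_mul]
    refine sum_congr rfl fun S _ => ?_
    rw [Matrix.maxMinor, dif_pos (by exact S.2)]
    exact congrArg₂ (· * ·) rfl (y.coord_val (⟨0, _⟩, S)).symm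
  · by_contra hS
    exact h (by rw [g.maxMinor_of_card_ne hS, zero_mul])

theorem maxMinor_mul_ENd_coord_zero (x : ENTerm A r s (0 + 1)) (S : Finset (Fin r)) :
    g.maxMinor S * (ENd g 0 x).coord 0 S = ∑ i ∈ Sᶜ, ∑ l, g.maxMinor S *
      ((-1) ^ (S.filter (· < i)).card * g l i * x.coord (0 + Finsupp.single l 1) (insert i S)) := by
  by_cases hS : S.card = s
  · rw [ENd_coord _ _ _ _ hS.le]
    simp only [mul_sum]
    refine (sum_subset (subset_univ Sᶜ) fun i _ hi => sum_eq_zero fun l _ => ?_).symm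
    rw [insert_eq_of_mem (notMem_compl.mp hi), x.coord_of_card_ne _ (by omega), mul_zero,
      mul_zero]
  · simp [g.maxMinor_of_card_ne hS]

theorem ENaug_comp_ENd : (ENaug g).comp (ENd g 0) = 0 := by
  refine LinearMap.ext fun x => ?_
  rw [LinearMap.comp_apply, LinearMap.zero_apply, ENaug_apply]
  let G : Finset (Fin r) → Fin r → A := fun S i => ∑ l, g.maxMinor S *
    ((-1) ^ (S.filter (· < i)).card * g l i * x.coord (0 + Finsupp.single l 1) (insert i S))
  have hcoeff : ∀ T, ∑ i ∈ T, G (T.erase i) i = 0 := by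
    intro T
    calc ∑ i ∈ T, G (T.erase i) i
        = ∑ l, x.coord (0 + Finsupp.single l 1) T *
            ∑ i ∈ T, (-1) ^ (T.filter (· < i)).card * g l i * g.maxMinor (T.erase i) := by
          simp only [G]
          rw [sum_comm]
          refine sum_congr rfl fun l _ => ?_
          rw [mul_sum]
          refine sum_congr rfl fun i hi => ?_
          have hsign : (T.erase i).filter (· < i) = T.filter (· < i) := by
            rw [filter_erase, erase_eq_of_notMem (by simp)]
          rw [insert_erase hi, hsign]
          ring
      _ = 0 := by simp only [g.sum_neg_one_pow_mul_maxMinor_erase, mul_zero, sum_const_zero]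
  simp only [maxMinor_mul_ENd_coord_zero]
  rw [sum_sum_compl_eq_sum_sum_erase (f := G)]
  exact sum_eq_zero fun T _ => hcoeff T

end

theorem eagonNorthcott_isComplex_general {A : Type} [CommRing A] {r s : ℕ}
    (gbar : (Fin r → A) →ₗ[A] (Fin s → A)) :
    (∀ k : ℕ, (ENd (LinearMap.toMatrix' gbar) k).comp
        (ENd (LinearMap.toMatrix' gbar) (k + 1)) = 0) ∧
    (ENaug (LinearMap.toMatrix' gbar)).comp (ENd (LinearMap.toMatrix' gbar) 0) = 0 :=
  ⟨ENd_comp_ENd _, ENaug_comp_ENd _⟩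

/-- **The Eagon–Northcott sequence is a complex.**  For any commutative ring `R` and any
`R`-linear map `ḡ : Rʳ → Rˢ` with `r ≥ s`, the composite of any two consecutive maps of
`EN(ḡ)` is zero, including the composite of the last differential with `⋀ˢ ḡ : ⋀ˢRʳ → R`. -/
theorem eagonNorthcott_isComplex {A : Type} [CommRing A] {r s : ℕ} (hrs : s ≤ r)
    (gbar : (Fin r → A) →ₗ[A] (Fin s → A)) :
    (∀ k : ℕ, (ENd (LinearMap.toMatrix' gbar) k).comp
        (ENd (LinearMap.toMatrix' gbar) (k + 1)) = 0) ∧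
    (ENaug (LinearMap.toMatrix' gbar)).comp (ENd (LinearMap.toMatrix' gbar) 0) = 0 :=
  eagonNorthcott_isComplex_general gbar

end
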